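/- Let T be a vtree over a finite variable set X, and let C1 and C2 be two TDDs respecting T, of widths k and k' respectively. Then there exists a TDD C respecting T computing the conjunction f_{C1} ∧ f_{C2}, of size at most |C1|·|C2| and width at most k·k'. -/

import Mathlib

/-- A vtree: a rooted binary tree whose leaves are labeled by variables. -/
inductive Vtree (V : Type) where
  | leaf : V → Vtree V
  | node : Vtree V → Vtree V → Vtree V

namespace Vtree

variable {V : Type} [DecidableEq V]

/-- The set of variables labeling the leaves of a vtree. -/
def vars : Vtree V → Finset V
  | leaf x => {x}
  | node l r => l.vars ∪ r.vars

/-- A vtree is proper when its leaves carry pairwise distinct variables,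
so that the leaves are in one-to-one correspondence with `vars`. -/
def Proper : Vtree V → Prop
  | leaf _ => True
  | node l r => l.Proper ∧ r.Proper ∧ Disjoint l.vars r.vars

/-- `T.IsNode t` : `t` is (the subtree rooted at) a node of `T`. -/
def IsNode : Vtree V → Vtree V → Prop
  | leaf x, t => t = leaf x
  | node l r, t => t = node l r ∨ l.IsNode t ∨ r.IsNode t

/-- Remove every leaf whose variable is in `Y`, suppressing unary nodes.
Returns `none` if no leaf survives. -/
def restrict (Y : Finset V) : Vtree V → Option (Vtree V)
  | leaf x => if x ∈ Y then none else some (leaf x)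
  | node l r =>
    match l.restrict Y, r.restrict Y with
    | none, o => o
    | some l', none => some l'
    | some l', some r' => some (node l' r')

/-- The vtree `T ∖ x`. -/
def remove (x : V) (T : Vtree V) : Option (Vtree V) := T.restrict {x}

/-- A vtree is linear when every internal node has a leaf child. -/
def Linear : Vtree V → Prop
  | leaf _ => True
  | node l r => ((∃ x, l = leaf x) ∨ (∃ x, r = leaf x)) ∧ l.Linear ∧ r.Linear

/-- The variable order induced by a linear vtree. -/
def order : Vtree V → List V
  | leaf x => [x]
  | node (leaf x) r => x :: r.order
  | node l (leaf x) => x :: l.order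
  | node l r => l.order ++ r.order

end Vtree

/-- Labels of leaf-layer nodes of a TDD: the positive literal, the negative
literal, and the constants 1 and 0. -/
inductive TLab where
  | pos | neg | one | zero
deriving DecidableEq

/-- Disjunction of two leaf labels (used when contracting twin leaf nodes). -/
def TLab.lor : TLab → TLab → TLab
  | .zero, a => a
  | a, .zero => a
  | .one, _ => .one
  | _, .one => .one
  | .pos, .pos => .pos
  | .neg, .neg => .neg
  | .pos, .neg => .one
  | .neg, .pos => .one

/-- A (non-deterministic) tree decision diagram structured along a vtree:
one layer of nodes (identified by natural numbers) per vtree node; leaf-layer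
nodes carry labels, internal-layer nodes carry their sets of input pairs. -/
inductive NTDD (V : Type) where
  | leaf (x : V) (ns : Finset ℕ) (lab : ℕ → TLab)
  | node (l r : NTDD V) (ns : Finset ℕ) (E : ℕ → Finset (ℕ × ℕ))

namespace NTDD

variable {V : Type}

/-- The vtree that an nTDD is structured along. -/
def shape : NTDD V → Vtree V
  | leaf x _ _ => .leaf x
  | node l r _ _ => .node l.shape r.shape

/-- The set of nodes of the top (root) layer. -/
def nodes : NTDD V → Finset ℕ
  | leaf _ ns _ => ns
  | node _ _ ns _ => ns

/-- The size of an nTDD: the total number of input pairs. -/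
def size : NTDD V → ℕ
  | leaf _ _ _ => 0
  | node l r ns E => l.size + r.size + ∑ g ∈ ns, (E g).card

/-- The width of an nTDD: the maximal cardinality of a layer. -/
def width : NTDD V → ℕ
  | leaf _ ns _ => ns.card
  | node l r ns _ => max ns.card (max l.width r.width)

/-- `C.sat g τ` : (the restriction of) the assignment `τ` is a model of the
function `f_g` computed by the top-layer node `g` of `C`. -/
def sat : NTDD V → ℕ → (V → Bool) → Prop
  | leaf x _ lab, g, τ =>
    match lab g with
    | .pos => τ x = true
    | .neg => τ x = false
    | .one => True
    | .zero => False
  | node l r _ E, g, τ => ∃ p ∈ E g, l.sat p.1 τ ∧ r.sat p.2 τ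

/-- Well-formedness: input pairs of top-layer nodes reference nodes of the
children layers. -/
def WF : NTDD V → Prop
  | leaf _ _ _ => True
  | node l r ns E => l.WF ∧ r.WF ∧ ∀ g ∈ ns, ∀ p ∈ E g, p.1 ∈ l.nodes ∧ p.2 ∈ r.nodes

/-- Determinism, turning an nTDD into a TDD: at each leaf layer at most one
node labeled by each of `x`, `¬x`, `1`, and if a node is labeled `1` then all
other nodes are labeled `0`; at each internal layer every pair is the input of
at most one node. -/
def Det : NTDD V → Prop
  | leaf _ ns lab =>
      (∀ g ∈ ns, ∀ g' ∈ ns, lab g = TLab.pos → lab g' = TLab.pos → g = g') ∧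
      (∀ g ∈ ns, ∀ g' ∈ ns, lab g = TLab.neg → lab g' = TLab.neg → g = g') ∧
      (∀ g ∈ ns, ∀ g' ∈ ns, lab g = TLab.one → lab g' = TLab.one → g = g') ∧
      (∀ g ∈ ns, lab g = TLab.one → ∀ g' ∈ ns, g' ≠ g → lab g' = TLab.zero)
  | node l r ns E => l.Det ∧ r.Det ∧ ∀ g ∈ ns, ∀ g' ∈ ns, g ≠ g' → Disjoint (E g) (E g')

/-- `C.Subdiagram D` : `D` is the sub-diagram of `C` sitting at some node of
the underlying vtree (including `C` itself). -/
def Subdiagram : NTDD V → NTDD V → Prop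
  | leaf x ns lab, D => D = leaf x ns lab
  | node l r ns E, D => D = node l r ns E ∨ l.Subdiagram D ∨ r.Subdiagram D

/-- A TDD is full if, at every layer, every assignment is a model of some node
of that layer. -/
def Full (C : NTDD V) : Prop :=
  ∀ D : NTDD V, C.Subdiagram D → ∀ τ : V → Bool, ∃ g ∈ D.nodes, D.sat g τ

end NTDD

/-- A choice of one node id per vtree node, mirroring the vtree: the data of a
certificate. -/
inductive IdTree where
  | leaf (g : ℕ)
  | node (g : ℕ) (l r : IdTree)

/-- The id chosen at the root. -/
def IdTree.root : IdTree → ℕ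
  | .leaf g => g
  | .node g _ _ => g

namespace NTDD

variable {V : Type}

/-- `C.IsCert P τ` : the choice `P` of one node per layer is a certificate for
`τ` in `C` (except for the root condition `P.root = out`, stated separately):
at a leaf labeled `x` the chosen node is labeled `1` or by a literal satisfied
by `τ`, and at an internal node the chosen pair of children nodes is an input
of the chosen node. -/
def IsCert : NTDD V → IdTree → (V → Bool) → Prop
  | leaf x ns lab, IdTree.leaf g, τ =>
      g ∈ ns ∧ (lab g = TLab.one ∨ (lab g = TLab.pos ∧ τ x = true) ∨
        (lab g = TLab.neg ∧ τ x = false))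
  | node l r ns E, IdTree.node g pl pr, τ =>
      g ∈ ns ∧ (pl.root, pr.root) ∈ E g ∧ l.IsCert pl τ ∧ r.IsCert pr τ
  | _, _, _ => False

/-- `SubPair C P D Q` : `D` is the sub-diagram of `C` at some vtree node `t`,
and `Q` is the corresponding part of the certificate data `P` (so `Q.root` is
the node that `P` chooses at `t`). -/
def SubPair : NTDD V → IdTree → NTDD V → IdTree → Prop
  | leaf x ns lab, P, D, Q => D = leaf x ns lab ∧ Q = P
  | node l r ns E, P, D, Q =>
      (D = node l r ns E ∧ Q = P) ∨
      (match P with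
       | IdTree.node _ pl pr => l.SubPair pl D Q ∨ r.SubPair pr D Q
       | _ => False)

/-- Contract the two top-layer nodes `g1, g1'` into the fresh node `v`. -/
def contractLayer (g1 g1' v : ℕ) : NTDD V → NTDD V
  | leaf x ns lab =>
      leaf x (insert v ((ns.erase g1).erase g1'))
        (fun g => if g = v then (lab g1).lor (lab g1') else lab g)
  | node l r ns E =>
      node l r (insert v ((ns.erase g1).erase g1'))
        (fun g => if g = v then E g1 ∪ E g1' else E g)

/-- Twin contraction of nodes `g1, g1'` of the left child layer into `v`:
they are merged in the left layer, and every input pair `(g1, g2)` or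
`(g1', g2)` of a top-layer node is replaced by `(v, g2)`. -/
def contractAtL (g1 g1' v : ℕ) : NTDD V → NTDD V
  | node l r ns E =>
      node (l.contractLayer g1 g1' v) r ns
        (fun g => (E g).image (fun p => if p.1 = g1 ∨ p.1 = g1' then (v, p.2) else p))
  | C => C

/-- Twin contraction of nodes `g1, g1'` of the right child layer into `v`. -/
def contractAtR (g1 g1' v : ℕ) : NTDD V → NTDD V
  | node l r ns E =>
      node l (r.contractLayer g1 g1' v) ns
        (fun g => (E g).image (fun p => if p.2 = g1 ∨ p.2 = g1' then (p.1, v) else p))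
  | C => C

open Classical in
/-- Replace the sub-diagram `D` of `C` by `D'` (in a proper vtree, sub-diagrams
at distinct positions are distinct, so this is unambiguous). -/
noncomputable def replace : NTDD V → NTDD V → NTDD V → NTDD V
  | leaf x ns lab, D, D' => if leaf x ns lab = D then D' else leaf x ns lab
  | node l r ns E, D, D' =>
      if node l r ns E = D then D'
      else node (l.replace D D') (r.replace D D') ns E

/-- `g1` and `g1'` are twins of the left child layer: they have the same
siblings with respect to every top-layer node. -/
def TwinsL (g1 g1' : ℕ) : NTDD V → Prop
  | node l _ ns E => g1 ∈ l.nodes ∧ g1' ∈ l.nodes ∧ g1 ≠ g1' ∧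
      ∀ g ∈ ns, ∀ g2 : ℕ, ((g1, g2) ∈ E g ↔ (g1', g2) ∈ E g)
  | _ => False

/-- `g1` and `g1'` are twins of the right child layer. -/
def TwinsR (g1 g1' : ℕ) : NTDD V → Prop
  | node _ r ns E => g1 ∈ r.nodes ∧ g1' ∈ r.nodes ∧ g1 ≠ g1' ∧
      ∀ g ∈ ns, ∀ g2 : ℕ, ((g2, g1) ∈ E g ↔ (g2, g1') ∈ E g)
  | _ => False

/-- The node set of the left child layer. -/
def leftNodes : NTDD V → Finset ℕ
  | node l _ _ _ => l.nodes
  | _ => ∅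

/-- The node set of the right child layer. -/
def rightNodes : NTDD V → Finset ℕ
  | node _ r _ _ => r.nodes
  | _ => ∅

end NTDD

/-- The number of distinct non-trivial `Y`-subfunctions of the Boolean
function `f` : functions of the form `σ ↦ f (Y.piecewise τ σ)` for some
`τ`, having at least one model. -/
noncomputable def subCount {V : Type} [DecidableEq V] (f : (V → Bool) → Prop) (Y : Finset V) : ℕ :=
  Nat.card {h : (V → Bool) → Prop |
    (∃ τ : V → Bool, h = fun σ => f (Y.piecewise τ σ)) ∧ ∃ σ : V → Bool, h σ}

/-- The number of distinct `Y`-subfunctions of `f` (trivial ones included). -/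
noncomputable def subCountAll {V : Type} [DecidableEq V] (f : (V → Bool) → Prop) (Y : Finset V) : ℕ :=
  Nat.card {h : (V → Bool) → Prop |
    ∃ τ : V → Bool, h = fun σ => f (Y.piecewise τ σ)}

/-!
The conjunction is computed by the product diagram: its `t`-nodes are the pairs `(g₁, g₂)` of
`t`-nodes of `C1` and `C2`, the inputs of `(g₁, g₂)` are the pairs of an input of `g₁` and an
input of `g₂`, and leaf labels are conjoined. By induction along the vtree, `(g₁, g₂)` computes
`f_{g₁} ∧ f_{g₂}`. Determinism is inherited componentwise, since a leaf layer is deterministic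
exactly when each value of its variable satisfies the label of at most one node. Layers and
input sets multiply in size, which gives the bounds on width and size.
-/

def TLab.land : TLab → TLab → TLab
  | .zero, _ => .zero
  | _, .zero => .zero
  | .one, a => a
  | a, .one => a
  | .pos, .pos => .pos
  | .neg, .neg => .neg
  | .pos, .neg => .zero
  | .neg, .pos => .zero

def TLab.Accepts : TLab → Bool → Prop
  | .pos, v => v = true
  | .neg, v => v = false
  | .one, _ => True
  | .zero, _ => False

namespace TLab

theorem accepts_land {a b : TLab} {v : Bool} : (a.land b).Accepts v ↔ a.Accepts v ∧ b.Accepts v := by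
  cases a <;> cases b <;> cases v <;> simp [land, Accepts]

theorem exists_accepts {a : TLab} (h : a ≠ .zero) : ∃ v, a.Accepts v := by
  cases a
  exacts [⟨true, rfl⟩, ⟨false, rfl⟩, ⟨true, trivial⟩, absurd rfl h]

end TLab

namespace NTDD

variable {V : Type}

theorem sat_leaf {x : V} {ns : Finset ℕ} {lab : ℕ → TLab} {g : ℕ} {τ : V → Bool} :
    (leaf x ns lab).sat g τ ↔ (lab g).Accepts (τ x) := by
  simp only [sat]
  cases lab g <;> rfl

theorem det_leaf_iff {x : V} {ns : Finset ℕ} {lab : ℕ → TLab} :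
    (leaf x ns lab).Det ↔
      ∀ v, ∀ g ∈ ns, ∀ g' ∈ ns, (lab g).Accepts v → (lab g').Accepts v → g = g' := by
  constructor
  · rintro ⟨hpos, hneg, hone, hzero⟩ v g hg g' hg' ha ha'
    by_contra hne
    have not_one : ∀ {a b}, a ∈ ns → b ∈ ns → a ≠ b → (lab b).Accepts v → lab a ≠ .one :=
      fun ha hb hab hacc hl => by rwa [hzero _ ha hl _ hb (Ne.symm hab)] at hacc
    have h1 := not_one hg hg' hne ha'
    have h2 := not_one hg' hg (Ne.symm hne) ha
    rcases hl : lab g <;> rcases hl' : lab g' <;> cases v <;>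
      simp only [hl, hl', TLab.Accepts, ne_eq, not_true_eq_false, reduceCtorEq] at ha ha' h1 h2
    exacts [hne (hpos g hg g' hg' hl hl'), hne (hneg g hg g' hg' hl hl')]
  · intro h
    refine ⟨fun g hg g' hg' hl hl' => h true g hg g' hg' ?_ ?_,
      fun g hg g' hg' hl hl' => h false g hg g' hg' ?_ ?_,
      fun g hg g' hg' hl hl' => h true g hg g' hg' ?_ ?_, fun g hg hl g' hg' hne => ?_⟩
    all_goals try simp only [hl, hl', TLab.Accepts]
    by_contra hz
    obtain ⟨v, hv⟩ := TLab.exists_accepts hz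
    exact hne (h v g' hg' g hg hv (by simp only [hl, TLab.Accepts]))

/-- Node `Nat.pair g₁ g₂` of a product layer stands for the pair `(g₁, g₂)`. -/
def pairNodes (s t : Finset ℕ) : Finset ℕ :=
  (s ×ˢ t).map Nat.pairEquiv.toEmbedding

/-- The input `((a₁, b₁), (a₂, b₂))` of `(g₁, g₂)`, paired componentwise into
`(Nat.pair a₁ a₂, Nat.pair b₁ b₂)`. -/
def pairEdges (A B : Finset (ℕ × ℕ)) : Finset (ℕ × ℕ) :=
  (A ×ˢ B).map ((Equiv.prodProdProdComm ℕ ℕ ℕ ℕ).trans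
    (Nat.pairEquiv.prodCongr Nat.pairEquiv)).toEmbedding

theorem card_pairNodes (s t : Finset ℕ) : (pairNodes s t).card = s.card * t.card := by
  rw [pairNodes, Finset.card_map, Finset.card_product]

theorem card_pairEdges (A B : Finset (ℕ × ℕ)) : (pairEdges A B).card = A.card * B.card := by
  rw [pairEdges, Finset.card_map, Finset.card_product]

theorem pair_mem_pairNodes {s t : Finset ℕ} {a b : ℕ} :
    Nat.pair a b ∈ pairNodes s t ↔ a ∈ s ∧ b ∈ t := by
  simp [pairNodes]

theorem forall_mem_pairNodes {s t : Finset ℕ} {P : ℕ → Prop} :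
    (∀ g ∈ pairNodes s t, P g) ↔ ∀ a ∈ s, ∀ b ∈ t, P (Nat.pair a b) := by
  simp only [pairNodes, Finset.forall_mem_map]
  exact ⟨fun h a ha b hb => h (a, b) (Finset.mem_product.2 ⟨ha, hb⟩),
    fun h p hp => h _ (Finset.mem_product.1 hp).1 _ (Finset.mem_product.1 hp).2⟩

theorem forall_mem_pairEdges {A B : Finset (ℕ × ℕ)} {P : ℕ × ℕ → Prop} :
    (∀ p ∈ pairEdges A B, P p) ↔
      ∀ q₁ ∈ A, ∀ q₂ ∈ B, P (Nat.pair q₁.1 q₂.1, Nat.pair q₁.2 q₂.2) := by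
  simp only [pairEdges, Finset.forall_mem_map]
  exact ⟨fun h a ha b hb => h (a, b) (Finset.mem_product.2 ⟨ha, hb⟩),
    fun h p hp => h _ (Finset.mem_product.1 hp).1 _ (Finset.mem_product.1 hp).2⟩

theorem exists_mem_pairEdges {A B : Finset (ℕ × ℕ)} {P : ℕ × ℕ → Prop} :
    (∃ p ∈ pairEdges A B, P p) ↔
      ∃ q₁ ∈ A, ∃ q₂ ∈ B, P (Nat.pair q₁.1 q₂.1, Nat.pair q₁.2 q₂.2) := by
  simp [pairEdges, and_assoc]

theorem disjoint_pairEdges {A B A' B' : Finset (ℕ × ℕ)} :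
    Disjoint (pairEdges A B) (pairEdges A' B') ↔ Disjoint A A' ∨ Disjoint B B' := by
  rw [pairEdges, pairEdges, Finset.disjoint_map, Finset.disjoint_product]

/-- On diagrams of different shapes this returns the first one. -/
def prod : NTDD V → NTDD V → NTDD V
  | leaf x ns₁ lab₁, leaf _ ns₂ lab₂ =>
      leaf x (pairNodes ns₁ ns₂) fun g => (lab₁ g.unpair.1).land (lab₂ g.unpair.2)
  | node l₁ r₁ ns₁ E₁, node l₂ r₂ ns₂ E₂ =>
      node (l₁.prod l₂) (r₁.prod r₂) (pairNodes ns₁ ns₂)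
        fun g => pairEdges (E₁ g.unpair.1) (E₂ g.unpair.2)
  | C, _ => C

theorem shape_prod : ∀ {C₁ C₂ : NTDD V}, C₁.shape = C₂.shape → (C₁.prod C₂).shape = C₁.shape
  | leaf _ _ _, leaf _ _ _, _ => rfl
  | node _ _ _ _, node _ _ _ _, h => by
      simp only [shape, Vtree.node.injEq] at h
      simp only [prod, shape, shape_prod h.1, shape_prod h.2]
  | leaf _ _ _, node _ _ _ _, h | node _ _ _ _, leaf _ _ _, h => nomatch h

theorem nodes_prod : ∀ {C₁ C₂ : NTDD V}, C₁.shape = C₂.shape →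
    (C₁.prod C₂).nodes = pairNodes C₁.nodes C₂.nodes
  | leaf _ _ _, leaf _ _ _, _ | node _ _ _ _, node _ _ _ _, _ => rfl
  | leaf _ _ _, node _ _ _ _, h | node _ _ _ _, leaf _ _ _, h => nomatch h

theorem sat_prod_pair : ∀ {C₁ C₂ : NTDD V}, C₁.shape = C₂.shape → ∀ (g₁ g₂ : ℕ) (τ : V → Bool),
    (C₁.prod C₂).sat (Nat.pair g₁ g₂) τ ↔ C₁.sat g₁ τ ∧ C₂.sat g₂ τ
  | leaf x _ _, leaf _ _ _, h, g₁, g₂, τ => by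
      cases h
      simp only [prod, sat_leaf, Nat.unpair_pair, TLab.accepts_land]
  | node l₁ r₁ _ _, node l₂ r₂ _ _, h, g₁, g₂, τ => by
      simp only [shape, Vtree.node.injEq] at h
      simp only [prod, sat, Nat.unpair_pair, exists_mem_pairEdges, sat_prod_pair h.1,
        sat_prod_pair h.2]
      constructor
      · rintro ⟨q₁, hq₁, q₂, hq₂, ⟨hl₁, hl₂⟩, hr₁, hr₂⟩
        exact ⟨⟨q₁, hq₁, hl₁, hr₁⟩, ⟨q₂, hq₂, hl₂, hr₂⟩⟩
      · rintro ⟨⟨q₁, hq₁, hl₁, hr₁⟩, ⟨q₂, hq₂, hl₂, hr₂⟩⟩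
        exact ⟨q₁, hq₁, q₂, hq₂, ⟨hl₁, hl₂⟩, hr₁, hr₂⟩
  | leaf _ _ _, node _ _ _ _, h, _, _, _ | node _ _ _ _, leaf _ _ _, h, _, _, _ => nomatch h

theorem WF.prod : ∀ {C₁ C₂ : NTDD V}, C₁.shape = C₂.shape → C₁.WF → C₂.WF → (C₁.prod C₂).WF
  | leaf _ _ _, leaf _ _ _, _, _, _ => trivial
  | node _ _ _ _, node _ _ _ _, h, ⟨hl₁, hr₁, hE₁⟩, ⟨hl₂, hr₂, hE₂⟩ => by
      simp only [shape, Vtree.node.injEq] at h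
      refine ⟨hl₁.prod h.1 hl₂, hr₁.prod h.2 hr₂, ?_⟩
      simp only [nodes_prod h.1, nodes_prod h.2, forall_mem_pairNodes, Nat.unpair_pair,
        forall_mem_pairEdges, pair_mem_pairNodes]
      intro a ha b hb q₁ hq₁ q₂ hq₂
      exact ⟨⟨(hE₁ a ha q₁ hq₁).1, (hE₂ b hb q₂ hq₂).1⟩, (hE₁ a ha q₁ hq₁).2, (hE₂ b hb q₂ hq₂).2⟩
  | leaf _ _ _, node _ _ _ _, h, _, _ | node _ _ _ _, leaf _ _ _, h, _, _ => nomatch h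

theorem Det.prod : ∀ {C₁ C₂ : NTDD V}, C₁.shape = C₂.shape → C₁.Det → C₂.Det → (C₁.prod C₂).Det
  | leaf _ _ _, leaf _ _ _, _, d₁, d₂ => by
      rw [det_leaf_iff] at d₁ d₂
      simp only [NTDD.prod, det_leaf_iff, forall_mem_pairNodes, Nat.unpair_pair, TLab.accepts_land]
      rintro v a ha b hb a' ha' b' hb' ⟨h₁, h₂⟩ ⟨h₁', h₂'⟩
      rw [d₁ v a ha a' ha' h₁ h₁', d₂ v b hb b' hb' h₂ h₂']
  | node _ _ _ _, node _ _ _ _, h, ⟨dl₁, dr₁, dE₁⟩, ⟨dl₂, dr₂, dE₂⟩ => by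
      simp only [shape, Vtree.node.injEq] at h
      refine ⟨dl₁.prod h.1 dl₂, dr₁.prod h.2 dr₂, ?_⟩
      simp only [forall_mem_pairNodes, Nat.unpair_pair, disjoint_pairEdges]
      intro a ha b hb a' ha' b' hb' hne
      by_cases haa : a = a'
      · subst haa
        exact Or.inr (dE₂ b hb b' hb' fun hbb => hne (hbb ▸ rfl))
      · exact Or.inl (dE₁ a ha a' ha' haa)
  | leaf _ _ _, node _ _ _ _, h, _, _ | node _ _ _ _, leaf _ _ _, h, _, _ => nomatch h

theorem width_prod_le : ∀ {C₁ C₂ : NTDD V}, C₁.shape = C₂.shape →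
    (C₁.prod C₂).width ≤ C₁.width * C₂.width
  | leaf _ _ _, leaf _ _ _, _ => (card_pairNodes _ _).le
  | node _ _ _ _, node _ _ _ _, h => by
      simp only [shape, Vtree.node.injEq] at h
      simp only [NTDD.prod, width, card_pairNodes]
      refine max_le ?_ (max_le ((width_prod_le h.1).trans ?_) ((width_prod_le h.2).trans ?_)) <;>
        gcongr <;> simp
  | leaf _ _ _, node _ _ _ _, h | node _ _ _ _, leaf _ _ _, h => nomatch h

theorem size_prod_le : ∀ {C₁ C₂ : NTDD V}, C₁.shape = C₂.shape →
    (C₁.prod C₂).size ≤ C₁.size * C₂.size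
  | leaf _ _ _, leaf _ _ _, _ => le_rfl
  | node l₁ r₁ ns₁ E₁, node l₂ r₂ ns₂ E₂, h => by
      simp only [shape, Vtree.node.injEq] at h
      have top : ∑ g ∈ pairNodes ns₁ ns₂, (pairEdges (E₁ g.unpair.1) (E₂ g.unpair.2)).card =
          (∑ a ∈ ns₁, (E₁ a).card) * ∑ b ∈ ns₂, (E₂ b).card := by
        simp only [pairNodes, Finset.sum_map, Finset.sum_product, Finset.sum_mul_sum,
          Equiv.coe_toEmbedding, Nat.pairEquiv_apply, Function.uncurry_apply_pair,
          Nat.unpair_pair, card_pairEdges]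
      simp only [NTDD.prod, size, top]
      calc _ ≤ l₁.size * l₂.size + r₁.size * r₂.size +
            (∑ a ∈ ns₁, (E₁ a).card) * ∑ b ∈ ns₂, (E₂ b).card := by
            gcongr
            exacts [size_prod_le h.1, size_prod_le h.2]
        _ ≤ _ := by simp only [add_mul, mul_add]; omega
  | leaf _ _ _, node _ _ _ _, h | node _ _ _ _, leaf _ _ _, h => nomatch h

end NTDD

theorem stmt5_general {V : Type} (T : Vtree V)
    (C1 : NTDD V) (out1 : ℕ) (hsh1 : C1.shape = T) (hWF1 : C1.WF) (hDet1 : C1.Det)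
    (hout1 : out1 ∈ C1.nodes)
    (C2 : NTDD V) (out2 : ℕ) (hsh2 : C2.shape = T) (hWF2 : C2.WF) (hDet2 : C2.Det)
    (hout2 : out2 ∈ C2.nodes)
    (k k' : ℕ) (hk : C1.width = k) (hk' : C2.width = k') :
    ∃ (C : NTDD V) (out : ℕ),
      C.shape = T ∧ C.WF ∧ C.Det ∧ out ∈ C.nodes ∧
      C.size ≤ C1.size * C2.size ∧ C.width ≤ k * k' ∧
      ∀ τ : V → Bool, (C.sat out τ ↔ (C1.sat out1 τ ∧ C2.sat out2 τ)) := by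
  have hsh : C1.shape = C2.shape := hsh1.trans hsh2.symm
  refine ⟨C1.prod C2, Nat.pair out1 out2, (NTDD.shape_prod hsh).trans hsh1, hWF1.prod hsh hWF2,
    hDet1.prod hsh hDet2, ?_, NTDD.size_prod_le hsh, hk ▸ hk' ▸ NTDD.width_prod_le hsh,
    NTDD.sat_prod_pair hsh out1 out2⟩
  rw [NTDD.nodes_prod hsh, NTDD.pair_mem_pairNodes]
  exact ⟨hout1, hout2⟩

/-- Conjunction: for TDDs `C1, C2` respecting the same vtree
`T` over a finite variable set `X`, of widths `k` and `k'`, there exists a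
TDD respecting `T` computing `f_{C1} ∧ f_{C2}`, of size at most `|C1|·|C2|`
and width at most `k·k'`. -/
theorem stmt5 {V : Type} [DecidableEq V] (X : Finset V) (T : Vtree V)
    (hTp : T.Proper) (hTX : T.vars = X)
    (C1 : NTDD V) (out1 : ℕ) (hsh1 : C1.shape = T) (hWF1 : C1.WF) (hDet1 : C1.Det)
    (hout1 : out1 ∈ C1.nodes)
    (C2 : NTDD V) (out2 : ℕ) (hsh2 : C2.shape = T) (hWF2 : C2.WF) (hDet2 : C2.Det)
    (hout2 : out2 ∈ C2.nodes)
    (k k' : ℕ) (hk : C1.width = k) (hk' : C2.width = k') :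
    ∃ (C : NTDD V) (out : ℕ),
      C.shape = T ∧ C.WF ∧ C.Det ∧ out ∈ C.nodes ∧
      C.size ≤ C1.size * C2.size ∧ C.width ≤ k * k' ∧
      ∀ τ : V → Bool, (C.sat out τ ↔ (C1.sat out1 τ ∧ C2.sat out2 τ)) :=
  stmt5_general T C1 out1 hsh1 hWF1 hDet1 hout1 C2 out2 hsh2 hWF2 hDet2 hout2 k k' hk hk'
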